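/- Let g(m,x) denote the sum over all x-element subsets Ŝ of c servers of max(n_{i,Ŝ}−1,0)·max(n_{j,Ŝ}−1,0) where jobs a_i, a_j are each assigned to exactly r servers and are jointly assigned to exactly m common servers. Then g(m+1,x) − g(m,x) = C(c−2, x−1) − 2·C(c−r−1, x−1) + C(c−2r+m, x−1). -/

import Mathlib

/-- Binomial coefficient `C(a,b)` on integers, with the convention that it is
zero when `b < 0` or `b > a`. -/
def ch (a b : ℤ) : ℤ := if 0 ≤ b ∧ b ≤ a then ((a.toNat).choose b.toNat : ℤ) else 0

/-!
Since `(n - 1)₊ = n - 1 + [n = 0]`, the summand of `g` expands into products of the cardinalities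
`#(A ∩ S)`, `#(B ∩ S)` and the indicators of `A ∩ S = ∅`, `B ∩ S = ∅`. Exchanging the order of
summation, the sum of each such term over the `x`-subsets `S` is a combination of the numbers
`C(c - #T - #t, x - #t)` of `x`-subsets containing `t` and avoiding `T`. Hence `g` has a closed form
depending only on `r` and `k = #(A ∩ B)`, and in the difference between `k = m + 1` and `k = m`
two applications of Pascal's rule leave the three stated binomial coefficients.
-/

open Finset

lemma ch_natCast (a b : ℕ) : ch a b = a.choose b := by
  unfold ch
  split_ifs with h
  · simp
  · rw [Nat.choose_eq_zero_of_lt (by omega), Nat.cast_zero]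

lemma ch_of_neg (a : ℤ) {b : ℤ} (hb : b < 0) : ch a b = 0 := if_neg (by omega)

lemma ch_add_one_add_one {n : ℤ} (hn : 0 ≤ n) (k : ℤ) :
    ch (n + 1) (k + 1) = ch n k + ch n (k + 1) := by
  lift n to ℕ using hn
  rcases lt_trichotomy k (-1) with hk | rfl | hk
  · simp only [ch_of_neg _ (by omega : k + 1 < 0), ch_of_neg _ (by omega : k < 0), add_zero]
  · simp [ch]
    omega
  · lift k to ℕ using (by omega)
    rw [← Nat.cast_add_one, ← Nat.cast_add_one, ch_natCast, ch_natCast, ch_natCast,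
      Nat.choose_succ_succ, Nat.cast_add]

section

variable {α : Type*} [DecidableEq α]

lemma sum_card_inter_mul {β : Type*} [CommSemiring β] (P : Finset (Finset α)) (A : Finset α)
    (f : Finset α → β) :
    ∑ S ∈ P, (#(A ∩ S) : β) * f S = ∑ i ∈ A, ∑ S ∈ P with i ∈ S, f S := by
  simp_rw [← filter_mem_eq_inter, ← sum_boole, sum_mul, ite_mul, one_mul, zero_mul, sum_filter]
  exact sum_comm

lemma natCast_card_inter_sub_one (A S : Finset α) :
    ((#(A ∩ S) - 1 : ℕ) : ℤ) = #(A ∩ S) - 1 + if Disjoint A S then 1 else 0 := by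
  by_cases h : Disjoint A S
  · simp [h, disjoint_iff_inter_eq_empty.1 h]
  · have := card_pos.2 (not_disjoint_iff_nonempty_inter.1 h)
    simp only [h, if_false]
    omega

variable [Fintype α]

lemma filter_disjoint_powersetCard_univ (T : Finset α) (x : ℕ) :
    {S ∈ powersetCard x (univ : Finset α) | Disjoint T S} = powersetCard x Tᶜ := by
  ext S
  simp [mem_powersetCard, subset_compl_iff_disjoint_left, and_comm]

lemma card_filter_disjoint_subset_powersetCard_univ {t T : Finset α} (htT : Disjoint t T)
    (x : ℕ) :
    (#{S ∈ powersetCard x univ | Disjoint T S ∧ t ⊆ S} : ℤ)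
      = ch (Fintype.card α - #T - #t) (x - #t) := by
  rw [← filter_filter, filter_disjoint_powersetCard_univ]
  rcases le_or_gt #t x with htx | hxt
  · rw [card_filter_powersetCard_subset _ _ _ (subset_compl_iff_disjoint_right.2 htT) htx,
      card_compl, ← ch_natCast]
    have := card_le_univ T
    have := card_le_card (subset_compl_iff_disjoint_right.2 htT)
    rw [card_compl] at this
    congr 1 <;> omega
  · rw [ch_of_neg _ (by omega), filter_false_of_mem, card_empty, Nat.cast_zero]
    intro S hS htS
    have := card_le_card htS
    rw [(mem_powersetCard.1 hS).2] at this
    omega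

lemma card_filter_mem_powersetCard_univ (x : ℕ) (i : α) :
    (#{S ∈ powersetCard x (univ : Finset α) | i ∈ S} : ℤ)
      = ch (Fintype.card α - 1) (x - 1) := by
  simpa using card_filter_disjoint_subset_powersetCard_univ
    (disjoint_empty_right {i}) x

lemma card_filter_mem_mem_powersetCard_univ (x : ℕ) {i j : α} (hij : i ≠ j) :
    (#{S ∈ powersetCard x (univ : Finset α) | i ∈ S ∧ j ∈ S} : ℤ)
      = ch (Fintype.card α - 2) (x - 2) := by
  have := card_filter_disjoint_subset_powersetCard_univ (disjoint_empty_right {i, j}) x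
  simp only [disjoint_empty_left, true_and, insert_subset_iff, singleton_subset_iff,
    card_pair hij, card_empty] at this
  simpa using this

lemma card_filter_mem_disjoint_powersetCard_univ (x : ℕ) {i : α} {T : Finset α} (hi : i ∉ T) :
    (#{S ∈ powersetCard x (univ : Finset α) | i ∈ S ∧ Disjoint T S} : ℤ)
      = ch (Fintype.card α - #T - 1) (x - 1) := by
  have := card_filter_disjoint_subset_powersetCard_univ (disjoint_singleton_left.2 hi) x
  simp only [singleton_subset_iff, card_singleton, Nat.cast_one] at this
  simpa only [and_comm] using this

lemma card_filter_disjoint_powersetCard_univ (x : ℕ) (T : Finset α) :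
    (#{S ∈ powersetCard x (univ : Finset α) | Disjoint T S} : ℤ)
      = ch (Fintype.card α - #T) x := by
  simpa using card_filter_disjoint_subset_powersetCard_univ (disjoint_empty_left T) x

lemma sum_card_inter_powersetCard_univ (x : ℕ) (A : Finset α) :
    ∑ S ∈ powersetCard x (univ : Finset α), (#(A ∩ S) : ℤ)
      = #A * ch (Fintype.card α - 1) (x - 1) := by
  simpa [card_filter_mem_powersetCard_univ] using
    sum_card_inter_mul (powersetCard x (univ : Finset α)) A (fun _ ↦ (1 : ℤ))

lemma sum_card_inter_mul_card_inter_powersetCard_univ (x : ℕ) (A B : Finset α) :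
    ∑ S ∈ powersetCard x (univ : Finset α), (#(A ∩ S) : ℤ) * #(B ∩ S)
      = #(A ∩ B) * ch (Fintype.card α - 1) (x - 1)
        + (#A * #B - #(A ∩ B)) * ch (Fintype.card α - 2) (x - 2) := by
  set c₁ := ch (Fintype.card α - 1) (x - 1)
  set c₂ := ch (Fintype.card α - 2) (x - 2)
  have pair_count (i j : α) :
      (#{S ∈ powersetCard x (univ : Finset α) | i ∈ S ∧ j ∈ S} : ℤ)
        = c₂ + if i = j then c₁ - c₂ else 0 := by
    by_cases hij : i = j
    · simp [hij, card_filter_mem_powersetCard_univ, c₁]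
    · simp [hij, card_filter_mem_mem_powersetCard_univ x hij, c₂]
  calc ∑ S ∈ powersetCard x univ, (#(A ∩ S) : ℤ) * #(B ∩ S)
      = ∑ i ∈ A, ∑ j ∈ B, (#{S ∈ powersetCard x (univ : Finset α) | i ∈ S ∧ j ∈ S} : ℤ) := by
        rw [sum_card_inter_mul]
        refine sum_congr rfl fun i _ ↦ ?_
        simpa [filter_filter] using
          sum_card_inter_mul {S ∈ powersetCard x univ | i ∈ S} B (fun _ ↦ (1 : ℤ))
    _ = ∑ i ∈ A, (#B * c₂ + if i ∈ B then c₁ - c₂ else 0) := by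
        simp_rw [pair_count, sum_add_distrib, sum_const, nsmul_eq_mul, sum_ite_eq]
    _ = _ := by
        rw [sum_add_distrib, sum_ite_mem, sum_const, sum_const, nsmul_eq_mul, nsmul_eq_mul]
        ring

lemma sum_card_inter_mul_indicator_disjoint_powersetCard_univ (x : ℕ) (A B : Finset α) :
    ∑ S ∈ powersetCard x (univ : Finset α), (#(A ∩ S) : ℤ) * (if Disjoint B S then 1 else 0)
      = #(A \ B) * ch (Fintype.card α - #B - 1) (x - 1) := by
  rw [sum_card_inter_mul, ← sum_filter_add_sum_filter_not A (· ∈ B), sum_eq_zero, zero_add,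
    filter_notMem_eq_sdiff, ← nsmul_eq_mul, ← sum_const]
  · refine sum_congr rfl fun i hi ↦ ?_
    rw [sum_boole, filter_filter, card_filter_mem_disjoint_powersetCard_univ x (mem_sdiff.1 hi).2]
  · intro i hi
    rw [sum_boole, Nat.cast_eq_zero, card_eq_zero, filter_eq_empty_iff]
    intro S hS hBS
    exact disjoint_left.1 hBS (mem_filter.1 hi).2 (mem_filter.1 hS).2

lemma sum_indicator_disjoint_powersetCard_univ (x : ℕ) (T : Finset α) :
    ∑ S ∈ powersetCard x (univ : Finset α), (if Disjoint T S then 1 else 0 : ℤ)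
      = ch (Fintype.card α - #T) x := by
  rw [sum_boole, card_filter_disjoint_powersetCard_univ]

/-- The paper's `g`, for jobs stored on the server sets `A` and `B`: `n_{i,S} = #(A ∩ S)`. -/
def pairExcessSum (A B : Finset α) (x : ℕ) : ℤ :=
  ∑ S ∈ powersetCard x (univ : Finset α), ((#(A ∩ S) - 1 : ℕ) : ℤ) * ((#(B ∩ S) - 1 : ℕ) : ℤ)

lemma pairExcessSum_eq {r k : ℕ} {A B : Finset α} (hA : #A = r) (hB : #B = r)
    (hAB : #(A ∩ B) = k) (x : ℕ) :
    pairExcessSum A B x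
      = k * ch (Fintype.card α - 1) (x - 1) + (r * r - k) * ch (Fintype.card α - 2) (x - 2)
        - 2 * r * ch (Fintype.card α - 1) (x - 1)
        + 2 * (r - k) * ch (Fintype.card α - r - 1) (x - 1)
        + ch (Fintype.card α) x - 2 * ch (Fintype.card α - r) x
        + ch (Fintype.card α - (2 * r - k)) x := by
  have expand (S : Finset α) :
      ((#(A ∩ S) - 1 : ℕ) : ℤ) * ((#(B ∩ S) - 1 : ℕ) : ℤ)
        = #(A ∩ S) * #(B ∩ S) - #(A ∩ S) - #(B ∩ S) + 1
          + #(A ∩ S) * (if Disjoint B S then 1 else 0)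
          + #(B ∩ S) * (if Disjoint A S then 1 else 0)
          - (if Disjoint A S then 1 else 0) - (if Disjoint B S then 1 else 0)
          + (if Disjoint (A ∪ B) S then 1 else 0) := by
    by_cases hAS : Disjoint A S <;> by_cases hBS : Disjoint B S <;>
      simp only [natCast_card_inter_sub_one, disjoint_union_left, hAS, hBS, and_self, and_true,
        true_and, if_true, if_false] <;> ring
  have hAB_sdiff : (#(A \ B) : ℤ) = r - k := by
    have := card_sdiff_add_card_inter A B
    omega
  have hBA_sdiff : (#(B \ A) : ℤ) = r - k := by
    have := card_sdiff_add_card_inter B A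
    rw [inter_comm] at this
    omega
  have hAB_union : (#(A ∪ B) : ℤ) = 2 * r - k := by
    have := card_union_add_card_inter A B
    omega
  simp only [pairExcessSum, expand, sum_add_distrib, sum_sub_distrib,
    sum_card_inter_mul_card_inter_powersetCard_univ, sum_card_inter_powersetCard_univ,
    sum_card_inter_mul_indicator_disjoint_powersetCard_univ,
    sum_indicator_disjoint_powersetCard_univ, sum_const, card_powersetCard, card_univ,
    nsmul_eq_mul, mul_one, ch_natCast]
  rw [hAB_sdiff, hBA_sdiff, hAB_union, hA, hB, hAB]
  ring

end

theorem g_succ_sub_g_general (c r m x : ℕ)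
    (A B A' B' : Finset (Fin c))
    (hA : A.card = r) (hB : B.card = r) (hA' : A'.card = r) (hB' : B'.card = r)
    (hAB : (A ∩ B).card = m) (hAB' : (A' ∩ B').card = m + 1) :
    (∑ S ∈ Finset.powersetCard x (Finset.univ : Finset (Fin c)),
        (((A' ∩ S).card - 1 : ℕ) : ℤ) * (((B' ∩ S).card - 1 : ℕ) : ℤ))
      - (∑ S ∈ Finset.powersetCard x (Finset.univ : Finset (Fin c)),
        (((A ∩ S).card - 1 : ℕ) : ℤ) * (((B ∩ S).card - 1 : ℕ) : ℤ))
      = ch ((c : ℤ) - 2) ((x : ℤ) - 1)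
        - 2 * ch ((c : ℤ) - r - 1) ((x : ℤ) - 1)
        + ch ((c : ℤ) - 2 * r + m) ((x : ℤ) - 1) := by
  have hmr : m + 1 ≤ r := hA' ▸ hAB' ▸ card_le_card inter_subset_left
  have hunion_le : 2 * r - m ≤ c := by
    have := card_union_add_card_inter A B
    have := card_le_univ (A ∪ B)
    rw [Fintype.card_fin] at this
    omega
  have pascal₁ : ch ((c : ℤ) - 1) (x - 1) = ch (c - 2) (x - 2) + ch (c - 2) (x - 1) := by
    convert ch_add_one_add_one (by omega : (0 : ℤ) ≤ c - 2) (x - 2) using 3 <;> ring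
  have pascal₂ : ch ((c : ℤ) - (2 * r - (m + 1))) x
      = ch (c - (2 * r - m)) (x - 1) + ch (c - (2 * r - m)) x := by
    convert ch_add_one_add_one (by omega : (0 : ℤ) ≤ c - (2 * r - m)) (x - 1) using 3 <;> ring
  change pairExcessSum A' B' x - pairExcessSum A B x = _
  rw [pairExcessSum_eq hA' hB' hAB', pairExcessSum_eq hA hB hAB, Fintype.card_fin]
  push_cast
  rw [pascal₁, pascal₂, show (c : ℤ) - (2 * r - m) = c - 2 * r + m by ring]
  ring

/-- Recursion for `g(m,x)`: if jobs on server-sets `A,B` (each of size `r`)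
share exactly `m` servers and jobs on server-sets `A',B'` share exactly `m+1`
servers, then the difference of the corresponding pairwise sums is
`C(c-2,x-1) - 2·C(c-r-1,x-1) + C(c-2r+m,x-1)`. -/
theorem g_succ_sub_g (c r m x : ℕ) (hm : m + 1 ≤ r)
    (A B A' B' : Finset (Fin c))
    (hA : A.card = r) (hB : B.card = r) (hA' : A'.card = r) (hB' : B'.card = r)
    (hAB : (A ∩ B).card = m) (hAB' : (A' ∩ B').card = m + 1) :
    (∑ S ∈ Finset.powersetCard x (Finset.univ : Finset (Fin c)),
        (((A' ∩ S).card - 1 : ℕ) : ℤ) * (((B' ∩ S).card - 1 : ℕ) : ℤ))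
      - (∑ S ∈ Finset.powersetCard x (Finset.univ : Finset (Fin c)),
        (((A ∩ S).card - 1 : ℕ) : ℤ) * (((B ∩ S).card - 1 : ℕ) : ℤ))
      = ch ((c : ℤ) - 2) ((x : ℤ) - 1)
        - 2 * ch ((c : ℤ) - r - 1) ((x : ℤ) - 1)
        + ch ((c : ℤ) - 2 * r + m) ((x : ℤ) - 1) :=
  g_succ_sub_g_general c r m x A B A' B' hA hB hA' hB' hAB hAB'
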